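/- Consider the finite volume scheme for the cross-diffusion Cahn-Hilliard system on an admissible mesh. Let p ∈ ℕ and assume U^p is strictly positive. Then any solution U^{p+1} of the scheme satisfies the discrete free energy dissipation inequality E_𝒯(U^{p+1}) − E_𝒯(U^p) + Δt_p Σ_{σ∈ℰ_int} τ_σ (D_{Kσ}μ^{p+1})ᵀ M(U_σ^{p+1}) D_{Kσ}μ^{p+1} ≤ 0, where U_σ^{p+1} = (U^{p+1}_{i,σ})_{0≤i≤n}; in particular, since M(U_σ^{p+1}) is positive semi-definite, E_𝒯(U^{p+1}) ≤ E_𝒯(U^p) ≤ E_𝒯(U^0). -/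

import Mathlib

/-!
STATEMENT 18: Discrete free energy dissipation for the finite volume scheme:
if `U^p` is strictly positive, any solution `U^{p+1}` of the scheme satisfies
`E_𝒯(U^{p+1}) − E_𝒯(U^p)
  + Δt_p Σ_{σ∈ℰ_int} τ_σ (D_{Kσ}μ^{p+1})ᵀ M(U_σ^{p+1}) (D_{Kσ}μ^{p+1}) ≤ 0`,
and in particular `E_𝒯(U^{p+1}) ≤ E_𝒯(U^p) ≤ E_𝒯(U^0)`.
-/

open Matrix

noncomputable section

/-- Mirror value `V_{Kσ}` of the discrete field `V` across the face `σ`,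
seen from the cell `K`. -/
def mirror {T F : Type*} [DecidableEq T] [DecidableEq F]
    (Fint : Finset F) (sideA sideB : F → T) (V : T → ℝ) (K : T) (σ : F) : ℝ :=
  if σ ∈ Fint then (if K = sideA σ then V (sideB σ) else V (sideA σ)) else V K

/-- Oriented jump `D_{Kσ}V = V_{Kσ} − V_K`. -/
def jump {T F : Type*} [DecidableEq T] [DecidableEq F]
    (Fint : Finset F) (sideA sideB : F → T) (V : T → ℝ) (K : T) (σ : F) : ℝ :=
  mirror Fint sideA sideB V K σ - V K

/-- The logarithmic mean used for the edge values. -/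
def logMean (a b : ℝ) : ℝ :=
  if min a b ≤ 0 then 0 else if a = b then a else (a - b) / (Real.log a - Real.log b)

/-- Edge value `U_{i,σ}`: the logarithmic mean of the two adjacent cell values. -/
def edgeVal {T F : Type*} {n : ℕ} (sideA sideB : F → T)
    (Un : Fin (n + 1) → T → ℝ) (i : Fin (n + 1)) (σ : F) : ℝ :=
  logMean (Un i (sideA σ)) (Un i (sideB σ))

/-- The discrete auxiliary variable
`W_{0,K}^{p+1/2} = −(ε/m_K) Σ_{σ∈ℰ_{K,int}} τ_σ D_{Kσ}U_0^{p+1} + β(1 − 2U_{0,K}^p)`. -/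
def W0 {T F : Type*} [DecidableEq T] [DecidableEq F]
    (facesOf : T → Finset F) (Fint : Finset F) (sideA sideB : F → T)
    (τ : F → ℝ) (mK : T → ℝ) (ε β : ℝ) {n : ℕ}
    (Uc Un : Fin (n + 1) → T → ℝ) (K : T) : ℝ :=
  -(ε / mK K) * ∑ σ ∈ (facesOf K).filter (· ∈ Fint),
      τ σ * jump Fint sideA sideB (Un 0) K σ
    + β * (1 - 2 * Uc 0 K)

/-- The discrete chemical potentials: `μ_{i,K} = ln U_{i,K}` for `i = 1,…,n`
and `μ_{0,K} = ln U_{0,K} + W_{0,K}^{p+1/2}`. -/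
def chemPotD {T F : Type*} [DecidableEq T] [DecidableEq F]
    (facesOf : T → Finset F) (Fint : Finset F) (sideA sideB : F → T)
    (τ : F → ℝ) (mK : T → ℝ) (ε β : ℝ) {n : ℕ}
    (Uc Un : Fin (n + 1) → T → ℝ) (i : Fin (n + 1)) (K : T) : ℝ :=
  Real.log (Un i K) +
    if i = 0 then W0 facesOf Fint sideA sideB τ mK ε β Uc Un K else 0

/-- The discrete fluxes, in entropic form:
`J_{i,Kσ} = −τ_σ Σ_{j≠i} K_{ij} U_{i,σ} U_{j,σ} D_{Kσ}(μ_i − μ_j)`. -/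
def dfluxE {T F : Type*} [DecidableEq T] [DecidableEq F]
    (facesOf : T → Finset F) (Fint : Finset F) (sideA sideB : F → T)
    (τ : F → ℝ) (mK : T → ℝ) (ε β : ℝ) {n : ℕ}
    (Kc : Fin (n + 1) → Fin (n + 1) → ℝ)
    (Uc Un : Fin (n + 1) → T → ℝ) (i : Fin (n + 1)) (K : T) (σ : F) : ℝ :=
  -(τ σ) * ∑ j ∈ Finset.univ.erase i,
      Kc i j * edgeVal sideA sideB Un i σ * edgeVal sideA sideB Un j σ *
        (jump Fint sideA sideB
            (chemPotD facesOf Fint sideA sideB τ mK ε β Uc Un i) K σ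
          - jump Fint sideA sideB
              (chemPotD facesOf Fint sideA sideB τ mK ε β Uc Un j) K σ)

/-- One backward Euler step of the finite volume scheme. -/
def SchemeStep {T F : Type*} [DecidableEq T] [DecidableEq F]
    (facesOf : T → Finset F) (Fint : Finset F) (sideA sideB : F → T)
    (τ : F → ℝ) (mK : T → ℝ) (ε β : ℝ) {n : ℕ}
    (Kc : Fin (n + 1) → Fin (n + 1) → ℝ) (Δt : ℝ)
    (Uc Un : Fin (n + 1) → T → ℝ) : Prop :=
  ∀ i K, mK K * (Un i K - Uc i K) / Δt
      + ∑ σ ∈ (facesOf K).filter (· ∈ Fint),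
          dfluxE facesOf Fint sideA sideB τ mK ε β Kc Uc Un i K σ = 0

/-- The discrete free energy `E_𝒯`. -/
def discreteEnergy {T F : Type*} [Fintype T] [DecidableEq T] [DecidableEq F]
    (Fint : Finset F) (sideA sideB : F → T)
    (τ : F → ℝ) (mK : T → ℝ) (ε β : ℝ) {n : ℕ}
    (V : Fin (n + 1) → T → ℝ) : ℝ :=
  (∑ i, ∑ K, mK K * (V i K * Real.log (V i K) - V i K + 1))
    + ε / 2 * ∑ σ ∈ Fint, τ σ * (jump Fint sideA sideB (V 0) (sideA σ) σ) ^ 2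
    + β * ∑ K, mK K * (V 0 K * (1 - V 0 K))

/-- The mobility matrix `M(u)`. -/
def mobility {n : ℕ} (Kc : Fin (n + 1) → Fin (n + 1) → ℝ)
    (u : Fin (n + 1) → ℝ) : Matrix (Fin (n + 1)) (Fin (n + 1)) ℝ :=
  Matrix.of fun i j =>
    if i = j then ∑ k ∈ Finset.univ.erase i, Kc i k * u i * u k
    else -(Kc i j * u i * u j)

section aux
variable {T F : Type*} [DecidableEq T] [DecidableEq F]

lemma jump_eqA {Fint : Finset F} {sideA sideB : F → T} (V : T → ℝ) {σ : F}
    (hσ : σ ∈ Fint) :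
    jump Fint sideA sideB V (sideA σ) σ = V (sideB σ) - V (sideA σ) := by
  simp [jump, mirror, hσ]

lemma jump_sideB {Fint : Finset F} {sideA sideB : F → T}
    (hAB : ∀ σ ∈ Fint, sideA σ ≠ sideB σ) (V : T → ℝ) {σ : F} (hσ : σ ∈ Fint) :
    jump Fint sideA sideB V (sideB σ) σ = - jump Fint sideA sideB V (sideA σ) σ := by
  have h : sideB σ ≠ sideA σ := (hAB σ hσ).symm
  simp only [jump, mirror, hσ, if_true, if_pos rfl, if_neg h, if_pos]
  ring

variable [Fintype T] [Fintype F]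

lemma face_sum_swap (facesOf : T → Finset F) (Fint : Finset F) (sideA sideB : F → T)
    (hAB : ∀ σ ∈ Fint, sideA σ ≠ sideB σ)
    (hmemA : ∀ σ ∈ Fint, σ ∈ facesOf (sideA σ))
    (hmemB : ∀ σ ∈ Fint, σ ∈ facesOf (sideB σ))
    (hint : ∀ σ ∈ Fint, ∀ K, σ ∈ facesOf K → K = sideA σ ∨ K = sideB σ)
    (f : T → F → ℝ) :
    ∑ K : T, ∑ σ ∈ (facesOf K).filter (· ∈ Fint), f K σ
      = ∑ σ ∈ Fint, (f (sideA σ) σ + f (sideB σ) σ) := by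
  have h1 : ∀ K : T, (facesOf K).filter (· ∈ Fint) = Fint.filter (· ∈ facesOf K) := by
    intro K; ext σ; simp [Finset.mem_filter, and_comm]
  calc ∑ K : T, ∑ σ ∈ (facesOf K).filter (· ∈ Fint), f K σ
      = ∑ K : T, ∑ σ ∈ Fint, if σ ∈ facesOf K then f K σ else 0 := by
        refine Finset.sum_congr rfl fun K _ => ?_
        rw [h1, Finset.sum_filter]
    _ = ∑ σ ∈ Fint, ∑ K : T, if σ ∈ facesOf K then f K σ else 0 := Finset.sum_comm
    _ = ∑ σ ∈ Fint, (f (sideA σ) σ + f (sideB σ) σ) := by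
        refine Finset.sum_congr rfl fun σ hσ => ?_
        have hA := hmemA σ hσ
        have hB := hmemB σ hσ
        have hne := hAB σ hσ
        have hset : Finset.univ.filter (fun K => σ ∈ facesOf K)
            = {sideA σ, sideB σ} := by
          ext K
          simp only [Finset.mem_filter, Finset.mem_univ, true_and, Finset.mem_insert,
            Finset.mem_singleton]
          constructor
          · exact fun h => hint σ hσ K h
          · rintro (rfl | rfl) <;> assumption
        rw [← Finset.sum_filter, hset, Finset.sum_insert (by simpa using hne),
          Finset.sum_singleton]

lemma sum_by_parts (facesOf : T → Finset F) (Fint : Finset F) (sideA sideB : F → T)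
    (hAB : ∀ σ ∈ Fint, sideA σ ≠ sideB σ)
    (hmemA : ∀ σ ∈ Fint, σ ∈ facesOf (sideA σ))
    (hmemB : ∀ σ ∈ Fint, σ ∈ facesOf (sideB σ))
    (hint : ∀ σ ∈ Fint, ∀ K, σ ∈ facesOf K → K = sideA σ ∨ K = sideB σ)
    (g : T → F → ℝ) (hanti : ∀ σ ∈ Fint, g (sideB σ) σ = - g (sideA σ) σ)
    (W : T → ℝ) :
    ∑ K : T, ∑ σ ∈ (facesOf K).filter (· ∈ Fint), g K σ * W K
      = - ∑ σ ∈ Fint, g (sideA σ) σ * (W (sideB σ) - W (sideA σ)) := by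
  rw [face_sum_swap facesOf Fint sideA sideB hAB hmemA hmemB hint, ← Finset.sum_neg_distrib]
  exact Finset.sum_congr rfl fun σ hσ => by rw [hanti σ hσ]; ring

end aux

lemma entropy_convex {a b : ℝ} (ha : 0 < a) (hb : 0 < b) :
    a * Real.log a - a - (b * Real.log b - b) ≤ Real.log a * (a - b) := by
  have h : Real.log (a / b) ≤ a / b - 1 := Real.log_le_sub_one_of_pos (div_pos ha hb)
  rw [Real.log_div ha.ne' hb.ne'] at h
  have h2 : b * (Real.log a - Real.log b) ≤ b * (a / b - 1) :=
    mul_le_mul_of_nonneg_left h hb.le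
  have h3 : b * (a / b - 1) = a - b := by field_simp
  nlinarith [h2, h3]

lemma logMean_nonneg (a b : ℝ) : 0 ≤ logMean a b := by
  unfold logMean
  split_ifs with h1 h2
  · exact le_rfl
  · push_neg at h1
    exact (lt_of_lt_of_le h1 (min_le_left a b)).le
  · push_neg at h1
    have ha : 0 < a := lt_of_lt_of_le h1 (min_le_left a b)
    have hb : 0 < b := lt_of_lt_of_le h1 (min_le_right a b)
    rcases lt_trichotomy a b with hlt | heq | hgt
    · rw [← neg_div_neg_eq]
      exact div_nonneg (by linarith)
        (by have := Real.log_lt_log ha hlt; linarith)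
    · exact absurd heq h2
    · exact div_nonneg (by linarith)
        (by have := Real.log_lt_log hb hgt; linarith)

lemma offdiag_swap {α : Type*} [Fintype α] [DecidableEq α] (f : α → α → ℝ) :
    ∑ i, ∑ j ∈ Finset.univ.erase i, f i j = ∑ i, ∑ j ∈ Finset.univ.erase i, f j i := by
  calc ∑ i, ∑ j ∈ Finset.univ.erase i, f i j
      = ∑ i, ∑ j, if j ≠ i then f i j else 0 := Finset.sum_congr rfl fun i _ => by
        rw [← Finset.filter_ne', Finset.sum_filter]
    _ = ∑ j, ∑ i, if j ≠ i then f i j else 0 := Finset.sum_comm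
    _ = ∑ i, ∑ j ∈ Finset.univ.erase i, f j i := by
        refine Finset.sum_congr rfl fun j _ => ?_
        rw [show (∑ y ∈ Finset.univ.erase j, f y j)
            = ∑ y, if y ≠ j then f y j else 0 by
          rw [← Finset.filter_ne', Finset.sum_filter]]
        refine Finset.sum_congr rfl fun i _ => ?_
        rcases eq_or_ne i j with hij | hij
        · simp [hij]
        · simp [hij, hij.symm]

lemma quadForm_eq {n : ℕ} (Kc : Fin (n + 1) → Fin (n + 1) → ℝ)
    (u v : Fin (n + 1) → ℝ) :
    v ⬝ᵥ (mobility Kc u).mulVec v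
      = ∑ i, ∑ j ∈ Finset.univ.erase i, Kc i j * u i * u j * v i * (v i - v j) := by
  simp only [dotProduct, Matrix.mulVec, mobility, Matrix.of_apply]
  refine Finset.sum_congr rfl fun i _ => ?_
  have hsplit : (∑ j, (if i = j then ∑ k ∈ Finset.univ.erase i, Kc i k * u i * u k
        else -(Kc i j * u i * u j)) * v j)
      = (∑ k ∈ Finset.univ.erase i, Kc i k * u i * u k) * v i
        + ∑ j ∈ Finset.univ.erase i, -(Kc i j * u i * u j) * v j := by
    rw [← Finset.add_sum_erase _ _ (Finset.mem_univ i), if_pos rfl]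
    congr 1
    refine Finset.sum_congr rfl fun j hj => ?_
    rw [if_neg (Finset.ne_of_mem_erase hj).symm]
  rw [hsplit, mul_add, Finset.sum_mul, Finset.mul_sum, Finset.mul_sum,
    ← Finset.sum_add_distrib]
  exact Finset.sum_congr rfl fun j _ => by ring

lemma quadForm_nonneg {n : ℕ} (Kc : Fin (n + 1) → Fin (n + 1) → ℝ)
    (hKsym : ∀ i j, Kc i j = Kc j i) (hKpos : ∀ i j, i ≠ j → 0 < Kc i j)
    (u v : Fin (n + 1) → ℝ) (hu : ∀ i, 0 ≤ u i) :
    0 ≤ v ⬝ᵥ (mobility Kc u).mulVec v := by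
  rw [quadForm_eq]
  set S := ∑ i, ∑ j ∈ Finset.univ.erase i, Kc i j * u i * u j * v i * (v i - v j) with hS
  have hswap := offdiag_swap (fun i j => Kc i j * u i * u j * v i * (v i - v j))
  have h2 : 2 * S = ∑ i, ∑ j ∈ Finset.univ.erase i,
      Kc i j * u i * u j * (v i - v j) ^ 2 := by
    have : 2 * S = S + S := by ring
    rw [this]
    nth_rewrite 2 [hS]
    rw [hswap, ← Finset.sum_add_distrib]
    refine Finset.sum_congr rfl fun i _ => ?_
    rw [← Finset.sum_add_distrib]
    refine Finset.sum_congr rfl fun j hj => ?_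
    rw [hKsym j i]; ring
  have hnn : 0 ≤ ∑ i, ∑ j ∈ Finset.univ.erase i,
      Kc i j * u i * u j * (v i - v j) ^ 2 := by
    refine Finset.sum_nonneg fun i _ => Finset.sum_nonneg fun j hj => ?_
    have hij : i ≠ j := (Finset.ne_of_mem_erase hj).symm
    exact mul_nonneg (mul_nonneg (mul_nonneg (hKpos i j hij).le (hu i)) (hu j))
      (sq_nonneg _)
  linarith

lemma mul_sum_helper (c x : ℝ) {m : ℕ} (s : Finset (Fin m)) (a : Fin m → ℝ) :
    (-c * ∑ j ∈ s, a j) * x = -c * ∑ j ∈ s, a j * x := by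
  rw [← Finset.sum_mul]; ring

section flux
variable {T F : Type*} [Fintype T] [Fintype F] [DecidableEq T] [DecidableEq F]
  (facesOf : T → Finset F) (Fint : Finset F) (sideA sideB : F → T)
  (τ : F → ℝ) (mK : T → ℝ) {n : ℕ} (ε β : ℝ)
  (Kc : Fin (n + 1) → Fin (n + 1) → ℝ) (Uc Un : Fin (n + 1) → T → ℝ)

lemma dflux_anti (hAB : ∀ σ ∈ Fint, sideA σ ≠ sideB σ) (i : Fin (n + 1)) {σ : F}
    (hσ : σ ∈ Fint) :
    dfluxE facesOf Fint sideA sideB τ mK ε β Kc Uc Un i (sideB σ) σ = - dfluxE facesOf Fint sideA sideB τ mK ε β Kc Uc Un i (sideA σ) σ := by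
  have hS : (∑ j ∈ Finset.univ.erase i, Kc i j * edgeVal sideA sideB Un i σ * edgeVal sideA sideB Un j σ *
        (jump Fint sideA sideB (chemPotD facesOf Fint sideA sideB τ mK ε β Uc Un i) (sideB σ) σ - jump Fint sideA sideB (chemPotD facesOf Fint sideA sideB τ mK ε β Uc Un j) (sideB σ) σ))
      = - ∑ j ∈ Finset.univ.erase i, Kc i j * edgeVal sideA sideB Un i σ * edgeVal sideA sideB Un j σ *
        (jump Fint sideA sideB (chemPotD facesOf Fint sideA sideB τ mK ε β Uc Un i) (sideA σ) σ - jump Fint sideA sideB (chemPotD facesOf Fint sideA sideB τ mK ε β Uc Un j) (sideA σ) σ) := by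
    rw [← Finset.sum_neg_distrib]
    refine Finset.sum_congr rfl fun j _ => ?_
    rw [jump_sideB hAB _ hσ, jump_sideB hAB _ hσ]
    ring
  simp only [dfluxE]
  rw [hS]
  ring

lemma flux_identity (K : T) (σ : F) :
    ∑ i, dfluxE facesOf Fint sideA sideB τ mK ε β Kc Uc Un i K σ * jump Fint sideA sideB (chemPotD facesOf Fint sideA sideB τ mK ε β Uc Un i) K σ
      = -(τ σ) * ((fun i => jump Fint sideA sideB (chemPotD facesOf Fint sideA sideB τ mK ε β Uc Un i) K σ) ⬝ᵥ
          (mobility Kc (fun i => edgeVal sideA sideB Un i σ)).mulVec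
            (fun i => jump Fint sideA sideB (chemPotD facesOf Fint sideA sideB τ mK ε β Uc Un i) K σ)) := by
  rw [quadForm_eq, Finset.mul_sum]
  refine Finset.sum_congr rfl fun i _ => ?_
  simp only [dfluxE]
  rw [mul_sum_helper]
  congr 1
  refine Finset.sum_congr rfl fun j _ => ?_
  ring

end flux

lemma step_main {T F : Type*} [Fintype T] [Fintype F] [DecidableEq T] [DecidableEq F]
    (facesOf : T → Finset F) (Fint : Finset F) (sideA sideB : F → T)
    (hAB : ∀ σ ∈ Fint, sideA σ ≠ sideB σ)
    (hmemA : ∀ σ ∈ Fint, σ ∈ facesOf (sideA σ))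
    (hmemB : ∀ σ ∈ Fint, σ ∈ facesOf (sideB σ))
    (hint : ∀ σ ∈ Fint, ∀ K, σ ∈ facesOf K → K = sideA σ ∨ K = sideB σ)
    (τ : F → ℝ) (hτ : ∀ σ, 0 < τ σ)
    (mK : T → ℝ) (hmKpos : ∀ K, 0 < mK K)
    {n : ℕ} (ε β : ℝ) (hε : 0 < ε) (hβ : 0 < β)
    (Kc : Fin (n + 1) → Fin (n + 1) → ℝ)
    (Δtp : ℝ) (hΔtp : 0 < Δtp)
    (Uc Un : Fin (n + 1) → T → ℝ)
    (hposc : ∀ i K, 0 < Uc i K) (hposn : ∀ i K, 0 < Un i K)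
    (hstep : SchemeStep facesOf Fint sideA sideB τ mK ε β Kc Δtp Uc Un) :
    discreteEnergy Fint sideA sideB τ mK ε β Un - discreteEnergy Fint sideA sideB τ mK ε β Uc
        + Δtp * ∑ σ ∈ Fint, τ σ * ((fun i => jump Fint sideA sideB
                (chemPotD facesOf Fint sideA sideB τ mK ε β Uc Un i) (sideA σ) σ) ⬝ᵥ
              (mobility Kc (fun i => edgeVal sideA sideB Un i σ)).mulVec
                (fun i => jump Fint sideA sideB
                  (chemPotD facesOf Fint sideA sideB τ mK ε β Uc Un i) (sideA σ) σ)) ≤ 0 := by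
  -- Step A: the scheme in explicit form
  have hstep' : ∀ i K, mK K * (Un i K - Uc i K)
      = -Δtp * ∑ σ ∈ (facesOf K).filter (· ∈ Fint), dfluxE facesOf Fint sideA sideB τ mK ε β Kc Uc Un i K σ := by
    intro i K
    have h := hstep i K
    have hd : Δtp ≠ 0 := hΔtp.ne'
    field_simp at h
    linarith
  -- Step B: the key summation-by-parts identity
  have key : ∑ i, ∑ K, chemPotD facesOf Fint sideA sideB τ mK ε β Uc Un i K * (mK K * (Un i K - Uc i K))
      = -Δtp * ∑ σ ∈ Fint, τ σ * ((fun i => jump Fint sideA sideB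
                (chemPotD facesOf Fint sideA sideB τ mK ε β Uc Un i) (sideA σ) σ) ⬝ᵥ
              (mobility Kc (fun i => edgeVal sideA sideB Un i σ)).mulVec
                (fun i => jump Fint sideA sideB
                  (chemPotD facesOf Fint sideA sideB τ mK ε β Uc Un i) (sideA σ) σ)) := by
    calc ∑ i, ∑ K, chemPotD facesOf Fint sideA sideB τ mK ε β Uc Un i K * (mK K * (Un i K - Uc i K))
        = ∑ i : Fin (n + 1), -Δtp * ∑ K : T, ∑ σ ∈ (facesOf K).filter (· ∈ Fint),
            dfluxE facesOf Fint sideA sideB τ mK ε β Kc Uc Un i K σ * chemPotD facesOf Fint sideA sideB τ mK ε β Uc Un i K := by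
          refine Finset.sum_congr rfl fun i _ => ?_
          rw [Finset.mul_sum]
          refine Finset.sum_congr rfl fun K _ => ?_
          rw [hstep' i K, mul_left_comm]
          congr 1
          rw [Finset.mul_sum]
          exact Finset.sum_congr rfl fun σ _ => mul_comm _ _
      _ = ∑ i : Fin (n + 1), -Δtp * -(∑ σ ∈ Fint,
            dfluxE facesOf Fint sideA sideB τ mK ε β Kc Uc Un i (sideA σ) σ * (chemPotD facesOf Fint sideA sideB τ mK ε β Uc Un i (sideB σ) - chemPotD facesOf Fint sideA sideB τ mK ε β Uc Un i (sideA σ))) := by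
          refine Finset.sum_congr rfl fun i _ => ?_
          congr 1
          exact sum_by_parts facesOf Fint sideA sideB hAB hmemA hmemB hint
            (fun K σ => dfluxE facesOf Fint sideA sideB τ mK ε β Kc Uc Un i K σ)
            (fun σ hσ => dflux_anti facesOf Fint sideA sideB τ mK ε β Kc Uc Un hAB i hσ)
            (fun K => chemPotD facesOf Fint sideA sideB τ mK ε β Uc Un i K)
      _ = ∑ i : Fin (n + 1), Δtp * ∑ σ ∈ Fint,
            dfluxE facesOf Fint sideA sideB τ mK ε β Kc Uc Un i (sideA σ) σ * jump Fint sideA sideB (chemPotD facesOf Fint sideA sideB τ mK ε β Uc Un i) (sideA σ) σ := by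
          refine Finset.sum_congr rfl fun i _ => ?_
          rw [neg_mul_neg, Finset.mul_sum, Finset.mul_sum]
          refine Finset.sum_congr rfl fun σ hσ => ?_
          rw [jump_eqA (chemPotD facesOf Fint sideA sideB τ mK ε β Uc Un i) hσ]
      _ = Δtp * ∑ σ ∈ Fint, ∑ i, dfluxE facesOf Fint sideA sideB τ mK ε β Kc Uc Un i (sideA σ) σ * jump Fint sideA sideB (chemPotD facesOf Fint sideA sideB τ mK ε β Uc Un i) (sideA σ) σ := by
          rw [← Finset.mul_sum]
          congr 1
          exact Finset.sum_comm
      _ = Δtp * ∑ σ ∈ Fint, -(τ σ) * ((fun i => jump Fint sideA sideB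
                (chemPotD facesOf Fint sideA sideB τ mK ε β Uc Un i) (sideA σ) σ) ⬝ᵥ
              (mobility Kc (fun i => edgeVal sideA sideB Un i σ)).mulVec
                (fun i => jump Fint sideA sideB
                  (chemPotD facesOf Fint sideA sideB τ mK ε β Uc Un i) (sideA σ) σ)) := by
          congr 1
          exact Finset.sum_congr rfl fun σ _ =>
            flux_identity facesOf Fint sideA sideB τ mK ε β Kc Uc Un (sideA σ) σ
      _ = -Δtp * ∑ σ ∈ Fint, τ σ * ((fun i => jump Fint sideA sideB
                (chemPotD facesOf Fint sideA sideB τ mK ε β Uc Un i) (sideA σ) σ) ⬝ᵥ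
              (mobility Kc (fun i => edgeVal sideA sideB Un i σ)).mulVec
                (fun i => jump Fint sideA sideB
                  (chemPotD facesOf Fint sideA sideB τ mK ε β Uc Un i) (sideA σ) σ)) := by
          rw [Finset.mul_sum, Finset.mul_sum]
          exact Finset.sum_congr rfl fun σ _ => by ring
  -- Step C: the chemical-potential identity
  have hW : ∑ K, W0 facesOf Fint sideA sideB τ mK ε β Uc Un K * (mK K * (Un 0 K - Uc 0 K))
      = ε * ∑ σ ∈ Fint, τ σ * jump Fint sideA sideB (Un 0) (sideA σ) σ *
            (jump Fint sideA sideB (Un 0) (sideA σ) σ - jump Fint sideA sideB (Uc 0) (sideA σ) σ)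
        + β * ∑ K, mK K * ((1 - 2 * Uc 0 K) * (Un 0 K - Uc 0 K)) := by
    have hSBP := sum_by_parts facesOf Fint sideA sideB hAB hmemA hmemB hint
        (fun K σ => τ σ * jump Fint sideA sideB (Un 0) K σ)
        (fun σ hσ => by rw [jump_sideB hAB _ hσ]; ring)
        (fun K => Un 0 K - Uc 0 K)
    calc ∑ K, W0 facesOf Fint sideA sideB τ mK ε β Uc Un K * (mK K * (Un 0 K - Uc 0 K))
        = ∑ K, ((-ε) * ∑ σ ∈ (facesOf K).filter (· ∈ Fint),
              (τ σ * jump Fint sideA sideB (Un 0) K σ) * (Un 0 K - Uc 0 K)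
            + β * (mK K * ((1 - 2 * Uc 0 K) * (Un 0 K - Uc 0 K)))) := by
          refine Finset.sum_congr rfl fun K _ => ?_
          simp only [W0]
          rw [← Finset.sum_mul]
          have hm : mK K ≠ 0 := (hmKpos K).ne'
          field_simp
      _ = (-ε) * (∑ K, ∑ σ ∈ (facesOf K).filter (· ∈ Fint),
              (τ σ * jump Fint sideA sideB (Un 0) K σ) * (Un 0 K - Uc 0 K))
            + β * ∑ K, mK K * ((1 - 2 * Uc 0 K) * (Un 0 K - Uc 0 K)) := by
          rw [Finset.sum_add_distrib, Finset.mul_sum, Finset.mul_sum]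
      _ = ε * ∑ σ ∈ Fint, τ σ * jump Fint sideA sideB (Un 0) (sideA σ) σ *
            (jump Fint sideA sideB (Un 0) (sideA σ) σ - jump Fint sideA sideB (Uc 0) (sideA σ) σ)
          + β * ∑ K, mK K * ((1 - 2 * Uc 0 K) * (Un 0 K - Uc 0 K)) := by
          rw [hSBP]
          congr 1
          rw [neg_mul_neg, Finset.mul_sum, Finset.mul_sum]
          refine Finset.sum_congr rfl fun σ hσ => ?_
          rw [jump_eqA (Un 0) hσ, jump_eqA (Uc 0) hσ]
          ring
  have hID : ∑ i, ∑ K, chemPotD facesOf Fint sideA sideB τ mK ε β Uc Un i K * (mK K * (Un i K - Uc i K))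
      = (∑ i, ∑ K, mK K * Real.log (Un i K) * (Un i K - Uc i K))
        + ε * ∑ σ ∈ Fint, τ σ * jump Fint sideA sideB (Un 0) (sideA σ) σ *
            (jump Fint sideA sideB (Un 0) (sideA σ) σ - jump Fint sideA sideB (Uc 0) (sideA σ) σ)
        + β * ∑ K, mK K * ((1 - 2 * Uc 0 K) * (Un 0 K - Uc 0 K)) := by
    have hsplit : ∀ (i : Fin (n + 1)) (K : T), chemPotD facesOf Fint sideA sideB τ mK ε β Uc Un i K * (mK K * (Un i K - Uc i K))
        = mK K * Real.log (Un i K) * (Un i K - Uc i K)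
          + (if i = 0 then W0 facesOf Fint sideA sideB τ mK ε β Uc Un K * (mK K * (Un i K - Uc i K)) else 0) := by
      intro i K
      simp only [chemPotD]
      split_ifs with h
      · ring
      · ring
    calc ∑ i, ∑ K, chemPotD facesOf Fint sideA sideB τ mK ε β Uc Un i K * (mK K * (Un i K - Uc i K))
        = (∑ i, ∑ K, mK K * Real.log (Un i K) * (Un i K - Uc i K))
          + ∑ i, ∑ K, (if i = 0 then W0 facesOf Fint sideA sideB τ mK ε β Uc Un K * (mK K * (Un i K - Uc i K)) else 0) := by
          rw [← Finset.sum_add_distrib]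
          refine Finset.sum_congr rfl fun i _ => ?_
          rw [← Finset.sum_add_distrib]
          exact Finset.sum_congr rfl fun K _ => hsplit i K
      _ = (∑ i, ∑ K, mK K * Real.log (Un i K) * (Un i K - Uc i K))
          + ∑ K, W0 facesOf Fint sideA sideB τ mK ε β Uc Un K * (mK K * (Un 0 K - Uc 0 K)) := by
          congr 1
          rw [Finset.sum_comm]
          refine Finset.sum_congr rfl fun K _ => ?_
          rw [Finset.sum_ite_eq' Finset.univ (0 : Fin (n + 1))
            (fun i => W0 facesOf Fint sideA sideB τ mK ε β Uc Un K * (mK K * (Un i K - Uc i K)))]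
          simp
      _ = (∑ i, ∑ K, mK K * Real.log (Un i K) * (Un i K - Uc i K))
          + (ε * ∑ σ ∈ Fint, τ σ * jump Fint sideA sideB (Un 0) (sideA σ) σ *
              (jump Fint sideA sideB (Un 0) (sideA σ) σ - jump Fint sideA sideB (Uc 0) (sideA σ) σ)
            + β * ∑ K, mK K * ((1 - 2 * Uc 0 K) * (Un 0 K - Uc 0 K))) := by
          rw [hW]
      _ = (∑ i, ∑ K, mK K * Real.log (Un i K) * (Un i K - Uc i K))
          + ε * ∑ σ ∈ Fint, τ σ * jump Fint sideA sideB (Un 0) (sideA σ) σ *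
              (jump Fint sideA sideB (Un 0) (sideA σ) σ - jump Fint sideA sideB (Uc 0) (sideA σ) σ)
          + β * ∑ K, mK K * ((1 - 2 * Uc 0 K) * (Un 0 K - Uc 0 K)) := by
          ring
  -- Step D: convexity bounds for the free energy
  have h1 : (∑ i, ∑ K, mK K * (Un i K * Real.log (Un i K) - Un i K + 1))
      - (∑ i, ∑ K, mK K * (Uc i K * Real.log (Uc i K) - Uc i K + 1))
      ≤ ∑ i, ∑ K, mK K * Real.log (Un i K) * (Un i K - Uc i K) := by
    rw [← Finset.sum_sub_distrib]
    refine Finset.sum_le_sum fun i _ => ?_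
    rw [← Finset.sum_sub_distrib]
    refine Finset.sum_le_sum fun K _ => ?_
    have h := mul_le_mul_of_nonneg_left (entropy_convex (hposn i K) (hposc i K))
      (hmKpos K).le
    nlinarith [h]
  have h2 : ε / 2 * (∑ σ ∈ Fint, τ σ * (jump Fint sideA sideB (Un 0) (sideA σ) σ) ^ 2)
      - ε / 2 * (∑ σ ∈ Fint, τ σ * (jump Fint sideA sideB (Uc 0) (sideA σ) σ) ^ 2)
      ≤ ε * ∑ σ ∈ Fint, τ σ * jump Fint sideA sideB (Un 0) (sideA σ) σ *
          (jump Fint sideA sideB (Un 0) (sideA σ) σ - jump Fint sideA sideB (Uc 0) (sideA σ) σ) := by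
    have hs : ∑ σ ∈ Fint, (τ σ * (jump Fint sideA sideB (Un 0) (sideA σ) σ) ^ 2
          - τ σ * (jump Fint sideA sideB (Uc 0) (sideA σ) σ) ^ 2)
        ≤ ∑ σ ∈ Fint, 2 * (τ σ * jump Fint sideA sideB (Un 0) (sideA σ) σ *
            (jump Fint sideA sideB (Un 0) (sideA σ) σ - jump Fint sideA sideB (Uc 0) (sideA σ) σ)) :=
      Finset.sum_le_sum fun σ _ => by
        nlinarith [mul_nonneg (hτ σ).le
          (sq_nonneg (jump Fint sideA sideB (Un 0) (sideA σ) σ - jump Fint sideA sideB (Uc 0) (sideA σ) σ))]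
    calc ε / 2 * (∑ σ ∈ Fint, τ σ * (jump Fint sideA sideB (Un 0) (sideA σ) σ) ^ 2)
        - ε / 2 * (∑ σ ∈ Fint, τ σ * (jump Fint sideA sideB (Uc 0) (sideA σ) σ) ^ 2)
        = ε / 2 * ∑ σ ∈ Fint, (τ σ * (jump Fint sideA sideB (Un 0) (sideA σ) σ) ^ 2
            - τ σ * (jump Fint sideA sideB (Uc 0) (sideA σ) σ) ^ 2) := by
          rw [Finset.sum_sub_distrib]
          ring
      _ ≤ ε / 2 * ∑ σ ∈ Fint, 2 * (τ σ * jump Fint sideA sideB (Un 0) (sideA σ) σ *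
            (jump Fint sideA sideB (Un 0) (sideA σ) σ - jump Fint sideA sideB (Uc 0) (sideA σ) σ)) :=
          mul_le_mul_of_nonneg_left hs (by positivity)
      _ = ε * ∑ σ ∈ Fint, τ σ * jump Fint sideA sideB (Un 0) (sideA σ) σ *
            (jump Fint sideA sideB (Un 0) (sideA σ) σ - jump Fint sideA sideB (Uc 0) (sideA σ) σ) := by
          rw [Finset.mul_sum, Finset.mul_sum]
          exact Finset.sum_congr rfl fun σ _ => by ring
  have h3 : β * (∑ K, mK K * (Un 0 K * (1 - Un 0 K)))
      - β * (∑ K, mK K * (Uc 0 K * (1 - Uc 0 K)))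
      ≤ β * ∑ K, mK K * ((1 - 2 * Uc 0 K) * (Un 0 K - Uc 0 K)) := by
    have hs : ∑ K, (mK K * (Un 0 K * (1 - Un 0 K)) - mK K * (Uc 0 K * (1 - Uc 0 K)))
        ≤ ∑ K, mK K * ((1 - 2 * Uc 0 K) * (Un 0 K - Uc 0 K)) :=
      Finset.sum_le_sum fun K _ => by
        nlinarith [mul_nonneg (hmKpos K).le (sq_nonneg (Un 0 K - Uc 0 K))]
    calc β * (∑ K, mK K * (Un 0 K * (1 - Un 0 K)))
        - β * (∑ K, mK K * (Uc 0 K * (1 - Uc 0 K)))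
        = β * ∑ K, (mK K * (Un 0 K * (1 - Un 0 K)) - mK K * (Uc 0 K * (1 - Uc 0 K))) := by
          rw [Finset.sum_sub_distrib]
          ring
      _ ≤ β * ∑ K, mK K * ((1 - 2 * Uc 0 K) * (Un 0 K - Uc 0 K)) :=
          mul_le_mul_of_nonneg_left hs hβ.le
  -- Conclusion
  simp only [discreteEnergy]
  linarith [h1, h2, h3, hID, key]
theorem statement_18 {T F : Type*} [Fintype T] [Fintype F]
    [DecidableEq T] [DecidableEq F]
    -- the admissible mesh
    (facesOf : T → Finset F) (Fint : Finset F) (sideA sideB : F → T)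
    (hAB : ∀ σ ∈ Fint, sideA σ ≠ sideB σ)
    (hmemA : ∀ σ ∈ Fint, σ ∈ facesOf (sideA σ))
    (hmemB : ∀ σ ∈ Fint, σ ∈ facesOf (sideB σ))
    (hint : ∀ σ ∈ Fint, ∀ K, σ ∈ facesOf K → K = sideA σ ∨ K = sideB σ)
    (hext : ∀ σ ∉ Fint, ∃! K, σ ∈ facesOf K)
    (τ : F → ℝ) (hτ : ∀ σ, 0 < τ σ)
    (mK : T → ℝ) (hmKpos : ∀ K, 0 < mK K)
    -- parameters of the system
    {n : ℕ} (ε β : ℝ) (hε : 0 < ε) (hβ : 0 < β)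
    (Kc : Fin (n + 1) → Fin (n + 1) → ℝ)
    (hKsym : ∀ i j, Kc i j = Kc j i) (hKpos : ∀ i j, i ≠ j → 0 < Kc i j)
    (Δt : ℕ → ℝ) (hΔt : ∀ p, 0 < Δt p)
    -- U is a solution of the scheme whose iterates are strictly positive
    (U : ℕ → Fin (n + 1) → T → ℝ)
    (hpos : ∀ p i K, 0 < U p i K)
    (hscheme : ∀ p, SchemeStep facesOf Fint sideA sideB τ mK ε β Kc (Δt p)
      (U p) (U (p + 1))) :
    ∀ p : ℕ,
      -- the discrete free energy dissipation inequality ...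
      discreteEnergy Fint sideA sideB τ mK ε β (U (p + 1))
          - discreteEnergy Fint sideA sideB τ mK ε β (U p)
          + Δt p * ∑ σ ∈ Fint, τ σ *
              ((fun i => jump Fint sideA sideB
                  (chemPotD facesOf Fint sideA sideB τ mK ε β (U p) (U (p + 1)) i)
                  (sideA σ) σ) ⬝ᵥ
                (mobility Kc (fun i => edgeVal sideA sideB (U (p + 1)) i σ)).mulVec
                  (fun i => jump Fint sideA sideB
                    (chemPotD facesOf Fint sideA sideB τ mK ε β (U p) (U (p + 1)) i)
                    (sideA σ) σ)) ≤ 0 ∧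
      -- ... and, in particular, monotone decay of the discrete free energy
      discreteEnergy Fint sideA sideB τ mK ε β (U (p + 1))
          ≤ discreteEnergy Fint sideA sideB τ mK ε β (U p) ∧
      discreteEnergy Fint sideA sideB τ mK ε β (U (p + 1))
          ≤ discreteEnergy Fint sideA sideB τ mK ε β (U 0) := by
  have h1 : ∀ p : ℕ,
      discreteEnergy Fint sideA sideB τ mK ε β (U (p + 1))
          - discreteEnergy Fint sideA sideB τ mK ε β (U p)
          + Δt p * ∑ σ ∈ Fint, τ σ *
              ((fun i => jump Fint sideA sideB
                  (chemPotD facesOf Fint sideA sideB τ mK ε β (U p) (U (p + 1)) i)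
                  (sideA σ) σ) ⬝ᵥ
                (mobility Kc (fun i => edgeVal sideA sideB (U (p + 1)) i σ)).mulVec
                  (fun i => jump Fint sideA sideB
                    (chemPotD facesOf Fint sideA sideB τ mK ε β (U p) (U (p + 1)) i)
                    (sideA σ) σ)) ≤ 0 := fun p =>
    step_main facesOf Fint sideA sideB hAB hmemA hmemB hint τ hτ mK hmKpos ε β hε hβ
      Kc (Δt p) (hΔt p) (U p) (U (p + 1)) (hpos p) (hpos (p + 1)) (hscheme p)
  have h2 : ∀ p : ℕ,
      discreteEnergy Fint sideA sideB τ mK ε β (U (p + 1))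
        ≤ discreteEnergy Fint sideA sideB τ mK ε β (U p) := by
    intro p
    have hq : 0 ≤ ∑ σ ∈ Fint, τ σ *
        ((fun i => jump Fint sideA sideB
            (chemPotD facesOf Fint sideA sideB τ mK ε β (U p) (U (p + 1)) i)
            (sideA σ) σ) ⬝ᵥ
          (mobility Kc (fun i => edgeVal sideA sideB (U (p + 1)) i σ)).mulVec
            (fun i => jump Fint sideA sideB
              (chemPotD facesOf Fint sideA sideB τ mK ε β (U p) (U (p + 1)) i)
              (sideA σ) σ)) :=
      Finset.sum_nonneg fun σ _ => mul_nonneg (hτ σ).le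
        (quadForm_nonneg Kc hKsym hKpos _ _ (fun i => logMean_nonneg _ _))
    have hp1 := h1 p
    have hprod := mul_nonneg (hΔt p).le hq
    linarith
  intro p
  refine ⟨h1 p, h2 p, ?_⟩
  induction p with
  | zero => exact h2 0
  | succ q ih => exact le_trans (h2 (q + 1)) ih
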